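/- Let P0, P1 be symmetric positive definite and Q = I - P0^{-1/2} (P0^{1/2} P1 P0^{1/2})^{1/2} P0^{-1/2}. Then the OMT geodesic P_t = ((1-t)P0^{1/2} + t P1^{1/2} U)((1-t)P0^{1/2} + t P1^{1/2} U)' with U = P1^{-1/2} P0^{-1/2} (P0^{1/2} P1 P0^{1/2})^{1/2} satisfies P_t = (I - tQ) P0 (I - tQ) for all t. -/

import Mathlib

open Matrix

/-- The symmetric positive definite square root of a positive definite matrix. -/
noncomputable def sqrtm {n : ℕ} {P : Matrix (Fin n) (Fin n) ℝ} (hP : P.PosDef) :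
    Matrix (Fin n) (Fin n) ℝ :=
  (hP.posSemidef.1.eigenvectorUnitary : Matrix (Fin n) (Fin n) ℝ) *
    diagonal ((↑) ∘ (fun i => √(hP.posSemidef.1.eigenvalues i))) *
    (star hP.posSemidef.1.eigenvectorUnitary : Matrix (Fin n) (Fin n) ℝ)

/-- Squared Frobenius norm of a real matrix. -/
noncomputable def frobSq {n : ℕ} (M : Matrix (Fin n) (Fin n) ℝ) : ℝ := (M * Mᵀ).trace

/-!
With `A = P0^{1/2}`, `S = (A P1 A)^{1/2}` and `R = A⁻¹ S A⁻¹`, the definition of `U` gives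
`P1^{1/2} U = A⁻¹ S`, so the geodesic factor is `(1 - t) A + t A⁻¹ S = ((1 - t) + t R) A = (1 - t Q) A`.
Hence `P t = (1 - t Q) A Aᵀ (1 - t Q)ᵀ`, and `A Aᵀ = P0` while `1 - t Q` is symmetric because
`A` and `S` are.
-/

section sqrtm

variable {n : ℕ} {P : Matrix (Fin n) (Fin n) ℝ} (hP : P.PosDef)

lemma sqrtm_transpose : (sqrtm hP)ᵀ = sqrtm hP := by
  rw [← conjTranspose_eq_transpose_of_trivial]
  simp [sqrtm, mul_assoc, Matrix.star_eq_conjTranspose]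

lemma sqrtm_mul_self : sqrtm hP * sqrtm hP = P := by
  have hspec := hP.posSemidef.1.spectral_theorem
  simp only [Unitary.conjStarAlgAut_apply] at hspec
  conv_rhs => rw [hspec]
  have hunitary := Unitary.coe_star_mul_self hP.posSemidef.1.eigenvectorUnitary
  simp only [sqrtm]
  rw [show ∀ a b c d e : Matrix (Fin n) (Fin n) ℝ, a * b * c * (a * d * e) = a * (b * (c * a) * d) * e
    from fun a b c d e => by noncomm_ring, hunitary, mul_one, diagonal_mul_diagonal]
  congr 2
  refine congrArg diagonal (funext fun i => ?_)
  simp [Real.mul_self_sqrt (hP.eigenvalues_pos i).le]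

lemma sqrtm_isUnit_det : IsUnit (sqrtm hP).det :=
  (isUnit_iff_isUnit_det _).mp <| isUnit_of_mul_isUnit_left <| (sqrtm_mul_self hP).symm ▸ hP.isUnit

end sqrtm

lemma Matrix.sub_smul_add_smul_nonsing_inv_mul {m R : Type*} [Fintype m] [DecidableEq m] [CommRing R]
    {A : Matrix m m R} (hA : IsUnit A.det) (S : Matrix m m R) (t : R) :
    (1 - t) • A + t • (A⁻¹ * S) = (1 - t • (1 - A⁻¹ * S * A⁻¹)) * A := by
  simp only [smul_sub, sub_mul, one_mul, smul_mul_assoc, mul_assoc, nonsing_inv_mul A hA, mul_one,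
    sub_smul, one_smul]
  abel

theorem stmt_2 {n : ℕ} {P0 P1 : Matrix (Fin n) (Fin n) ℝ}
    (hP0 : P0.PosDef) (hP1 : P1.PosDef)
    (hS : (sqrtm hP0 * P1 * sqrtm hP0).PosDef)
    (U : Matrix (Fin n) (Fin n) ℝ)
    (hU : U = (sqrtm hP1)⁻¹ * (sqrtm hP0)⁻¹ * sqrtm hS)
    (Q : Matrix (Fin n) (Fin n) ℝ)
    (hQ : Q = 1 - (sqrtm hP0)⁻¹ * sqrtm hS * (sqrtm hP0)⁻¹)
    (P : ℝ → Matrix (Fin n) (Fin n) ℝ)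
    (hP : ∀ t : ℝ, P t = ((1 - t) • sqrtm hP0 + t • (sqrtm hP1 * U)) *
        ((1 - t) • sqrtm hP0 + t • (sqrtm hP1 * U))ᵀ) :
    ∀ t : ℝ, P t = (1 - t • Q) * P0 * (1 - t • Q) := by
  intro t
  have hBU : sqrtm hP1 * U = (sqrtm hP0)⁻¹ * sqrtm hS := by
    rw [hU, ← mul_assoc, ← mul_assoc, mul_nonsing_inv _ (sqrtm_isUnit_det hP1), one_mul]
  have hQ_transpose : Qᵀ = Q := by
    simp [hQ, transpose_nonsing_inv, sqrtm_transpose, Matrix.mul_assoc]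
  have hK_transpose : (1 - t • Q)ᵀ = 1 - t • Q := by
    rw [transpose_sub, transpose_one, transpose_smul, hQ_transpose]
  rw [hP t, hBU, sub_smul_add_smul_nonsing_inv_mul (sqrtm_isUnit_det hP0), ← hQ, transpose_mul,
    hK_transpose, sqrtm_transpose, Matrix.mul_assoc, ← Matrix.mul_assoc (sqrtm hP0),
    sqrtm_mul_self, ← Matrix.mul_assoc]
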